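/- For every $k\in\mathbb{N}$ there exist constants $C_k,D_k>0$ such that for all Schwartz functions $\phi$ on $\mathbb{R}$: $\|x^{2k}\phi\|_{L^2(\mathbb{R})}\le C_k\|H^k\phi\|_{L^2(\mathbb{R})}$ and $\|H(x^{2(k-1)}\phi)\|_{L^2(\mathbb{R})}\le D_k\|H^k\phi\|_{L^2(\mathbb{R})}$, where $H\phi=-\phi''+x^2\phi$. -/

import Mathlib

open MeasureTheory

noncomputable section

/-- The one-dimensional Hermite operator `H = -d²/dx² + x²`. -/
def hermiteOp1 (f : ℝ → ℝ) : ℝ → ℝ :=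
  fun x => -(deriv (deriv f) x) + x ^ 2 * f x

/-!
Write `X^n` for multiplication by `x^n`, `D = d/dx` and `‖·‖` for the `L²` norm, so that
`H = X² - D²`. Integration by parts gives `⟪Hφ, φ⟫ = ‖Xφ‖² + ‖Dφ‖² ≥ -2⟪Xφ, Dφ⟫ = ‖φ‖²`,
hence `‖φ‖ ≤ ‖Hφ‖`, and more generally the weighted energy identity
`⟪Hφ, X^(2J+2) φ⟫ = ‖X^(J+2) φ‖² + ‖X^(J+1) Dφ‖² - (J+1)(2J+1) ‖X^J φ‖²`,
whose case `J = 0` gives `‖X²φ‖ ≤ 2‖Hφ‖`. By the commutator formula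
`H X^(M+2) = X^(M+2) H - (M+2)(M+1) X^M - 2(M+2) X^(M+1) D`, the operator `H X^(2K+2)` is
bounded by `H^(K+2)` as soon as `X^(2K)` and `X^(2K+2)` are bounded by `H^K` and `H^(K+1)`:
the derivative term is controlled by the energy identity and Cauchy–Schwarz. Applying
`‖X²ψ‖ ≤ 2‖Hψ‖` to `ψ = X^(2K+2) φ` closes a two-step induction on `k`.
-/

open SchwartzMap
open scoped RealInnerProductSpace

namespace SchwartzMap

def mulPowCLM (n : ℕ) : 𝓢(ℝ, ℝ) →L[ℝ] 𝓢(ℝ, ℝ) := smulLeftCLM ℝ (fun x : ℝ => x ^ n)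

@[simp]
lemma mulPowCLM_apply (n : ℕ) (φ : 𝓢(ℝ, ℝ)) (x : ℝ) : mulPowCLM n φ x = x ^ n * φ x :=
  smulLeftCLM_apply_apply (by fun_prop) φ x

lemma mulPowCLM_mulPowCLM (m n : ℕ) (φ : 𝓢(ℝ, ℝ)) :
    mulPowCLM m (mulPowCLM n φ) = mulPowCLM (m + n) φ := by
  ext x; simp [pow_add, mul_assoc]

lemma mulPowCLM_zero (φ : 𝓢(ℝ, ℝ)) : mulPowCLM 0 φ = φ := by
  ext x; simp

lemma coe_derivCLM (φ : 𝓢(ℝ, ℝ)) : ⇑(derivCLM ℝ ℝ φ) = deriv φ :=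
  funext (derivCLM_apply ℝ φ)

lemma derivCLM_mulPowCLM_succ (n : ℕ) (φ : 𝓢(ℝ, ℝ)) :
    derivCLM ℝ ℝ (mulPowCLM (n + 1) φ)
      = (n + 1 : ℝ) • mulPowCLM n φ + mulPowCLM (n + 1) (derivCLM ℝ ℝ φ) := by
  ext x
  have hprod : HasDerivAt (fun y => y ^ (n + 1) * φ y)
      ((n + 1 : ℝ) * x ^ n * φ x + x ^ (n + 1) * deriv φ x) x := by
    simpa using (hasDerivAt_pow (n + 1) x).fun_mul (φ.hasDerivAt x)
  have hcoe : ⇑(mulPowCLM (n + 1) φ) = fun y => y ^ (n + 1) * φ y := by ext; simp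
  rw [derivCLM_apply, hcoe, hprod.deriv]
  simp
  ring

def hermiteCLM : 𝓢(ℝ, ℝ) →L[ℝ] 𝓢(ℝ, ℝ) := mulPowCLM 2 - derivCLM ℝ ℝ ∘L derivCLM ℝ ℝ

lemma coe_hermiteCLM (φ : 𝓢(ℝ, ℝ)) : ⇑(hermiteCLM φ) = hermiteOp1 φ := by
  ext x
  simp [hermiteCLM, hermiteOp1, coe_derivCLM]
  ring

lemma coe_hermiteCLM_iterate (k : ℕ) (φ : 𝓢(ℝ, ℝ)) :
    ⇑(hermiteCLM^[k] φ) = hermiteOp1^[k] φ := by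
  induction k with
  | zero => rfl
  | succ k ih =>
    rw [Function.iterate_succ_apply', Function.iterate_succ_apply', coe_hermiteCLM, ih]

abbrev toL2 : 𝓢(ℝ, ℝ) →L[ℝ] Lp ℝ 2 (volume : Measure ℝ) := toLpCLM ℝ ℝ 2 volume

lemma inner_toL2_toL2 (f g : 𝓢(ℝ, ℝ)) : ⟪toL2 f, toL2 g⟫ = ∫ x, f x * g x := by
  rw [L2.inner_def]
  refine integral_congr_ae ?_
  filter_upwards [f.coeFn_toLp 2, g.coeFn_toLp 2] with x hf hg
  simp [hf, hg, mul_comm]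

lemma inner_toL2_congr {f g f' g' : 𝓢(ℝ, ℝ)} (h : ∀ x, f x * g x = f' x * g' x) :
    ⟪toL2 f, toL2 g⟫ = ⟪toL2 f', toL2 g'⟫ := by
  simp only [inner_toL2_toL2, h]

lemma inner_toL2_derivCLM (f g : 𝓢(ℝ, ℝ)) :
    ⟪toL2 (derivCLM ℝ ℝ f), toL2 g⟫ = -⟪toL2 f, toL2 (derivCLM ℝ ℝ g)⟫ := by
  simp only [inner_toL2_toL2, derivCLM_apply, integral_mul_deriv_eq_neg_deriv_mul, neg_neg]

lemma two_mul_inner_mulPowCLM_succ_derivCLM (n : ℕ) (φ : 𝓢(ℝ, ℝ)) :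
    2 * ⟪toL2 (mulPowCLM (n + 1) φ), toL2 (derivCLM ℝ ℝ φ)⟫
      = -(n + 1) * ⟪toL2 (mulPowCLM n φ), toL2 φ⟫ := by
  have h := inner_toL2_derivCLM (mulPowCLM (n + 1) φ) φ
  have hsymm : ⟪toL2 (mulPowCLM (n + 1) (derivCLM ℝ ℝ φ)), toL2 φ⟫
      = ⟪toL2 (mulPowCLM (n + 1) φ), toL2 (derivCLM ℝ ℝ φ)⟫ :=
    inner_toL2_congr fun x => by simp only [mulPowCLM_apply]; ring
  rw [derivCLM_mulPowCLM_succ, map_add, map_smul, inner_add_left, real_inner_smul_left,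
    hsymm] at h
  linarith

lemma inner_hermiteCLM_self (φ : 𝓢(ℝ, ℝ)) :
    ⟪toL2 (hermiteCLM φ), toL2 φ⟫
      = ‖toL2 (mulPowCLM 1 φ)‖ ^ 2 + ‖toL2 (derivCLM ℝ ℝ φ)‖ ^ 2 := by
  have hpot : ⟪toL2 (mulPowCLM 2 φ), toL2 φ⟫ = ⟪toL2 (mulPowCLM 1 φ), toL2 (mulPowCLM 1 φ)⟫ :=
    inner_toL2_congr fun x => by simp only [mulPowCLM_apply]; ring
  rw [hermiteCLM, _root_.sub_apply, map_sub, inner_sub_left, hpot,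
    ContinuousLinearMap.comp_apply, inner_toL2_derivCLM, real_inner_self_eq_norm_sq,
    real_inner_self_eq_norm_sq]
  ring

lemma inner_hermiteCLM_mulPowCLM (J : ℕ) (φ : 𝓢(ℝ, ℝ)) :
    ⟪toL2 (hermiteCLM φ), toL2 (mulPowCLM (2 * J + 2) φ)⟫
      = ‖toL2 (mulPowCLM (J + 2) φ)‖ ^ 2 + ‖toL2 (mulPowCLM (J + 1) (derivCLM ℝ ℝ φ))‖ ^ 2
        - (J + 1) * (2 * J + 1) * ‖toL2 (mulPowCLM J φ)‖ ^ 2 := by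
  have hpot : ⟪toL2 (mulPowCLM 2 φ), toL2 (mulPowCLM (2 * J + 2) φ)⟫
      = ⟪toL2 (mulPowCLM (J + 2) φ), toL2 (mulPowCLM (J + 2) φ)⟫ :=
    inner_toL2_congr fun x => by simp only [mulPowCLM_apply]; ring
  have hkin : ⟪toL2 (derivCLM ℝ ℝ φ), toL2 (mulPowCLM (2 * J + 2) (derivCLM ℝ ℝ φ))⟫
      = ⟪toL2 (mulPowCLM (J + 1) (derivCLM ℝ ℝ φ)),
          toL2 (mulPowCLM (J + 1) (derivCLM ℝ ℝ φ))⟫ :=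
    inner_toL2_congr fun x => by simp only [mulPowCLM_apply]; ring
  have hcross : ⟪toL2 (derivCLM ℝ ℝ φ), toL2 (mulPowCLM (2 * J + 1) φ)⟫
      = ⟪toL2 (mulPowCLM (2 * J + 1) φ), toL2 (derivCLM ℝ ℝ φ)⟫ := real_inner_comm _ _
  have hpos : ⟪toL2 (mulPowCLM (2 * J) φ), toL2 φ⟫
      = ⟪toL2 (mulPowCLM J φ), toL2 (mulPowCLM J φ)⟫ :=
    inner_toL2_congr fun x => by simp only [mulPowCLM_apply]; ring
  have hparts := two_mul_inner_mulPowCLM_succ_derivCLM (2 * J) φ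
  rw [hpos] at hparts
  rw [hermiteCLM, _root_.sub_apply, map_sub, inner_sub_left, hpot,
    ContinuousLinearMap.comp_apply, inner_toL2_derivCLM, derivCLM_mulPowCLM_succ, map_add,
    map_smul, inner_add_right, real_inner_smul_right, hkin, hcross]
  simp only [real_inner_self_eq_norm_sq] at *
  push_cast at *
  linear_combination ((J : ℝ) + 1) * hparts

lemma norm_toL2_le_norm_toL2_hermiteCLM (φ : 𝓢(ℝ, ℝ)) : ‖toL2 φ‖ ≤ ‖toL2 (hermiteCLM φ)‖ := by
  have hparts := two_mul_inner_mulPowCLM_succ_derivCLM 0 φ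
  rw [mulPowCLM_zero, real_inner_self_eq_norm_sq] at hparts
  have hcs := abs_real_inner_le_norm (toL2 (mulPowCLM 1 φ)) (toL2 (derivCLM ℝ ℝ φ))
  have henergy := inner_hermiteCLM_self φ
  have hcs' := real_inner_le_norm (toL2 (hermiteCLM φ)) (toL2 φ)
  nlinarith [abs_le.mp hcs, sq_nonneg (‖toL2 (mulPowCLM 1 φ)‖ - ‖toL2 (derivCLM ℝ ℝ φ)‖),
    norm_nonneg (toL2 φ), norm_nonneg (toL2 (hermiteCLM φ))]

lemma monotone_norm_toL2_hermiteCLM_iterate (φ : 𝓢(ℝ, ℝ)) :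
    Monotone fun k => ‖toL2 (hermiteCLM^[k] φ)‖ :=
  monotone_nat_of_le_succ fun k => by
    simpa only [Function.iterate_succ_apply'] using norm_toL2_le_norm_toL2_hermiteCLM _

lemma norm_toL2_mulPowCLM_two_le (φ : 𝓢(ℝ, ℝ)) :
    ‖toL2 (mulPowCLM 2 φ)‖ ≤ 2 * ‖toL2 (hermiteCLM φ)‖ := by
  have henergy := inner_hermiteCLM_mulPowCLM 0 φ
  simp only [mul_zero, zero_add, Nat.cast_zero, one_mul, mulPowCLM_zero] at henergy
  have hcs := real_inner_le_norm (toL2 (hermiteCLM φ)) (toL2 (mulPowCLM 2 φ))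
  have hφ := norm_toL2_le_norm_toL2_hermiteCLM φ
  nlinarith [norm_nonneg (toL2 φ), norm_nonneg (toL2 (hermiteCLM φ)),
    norm_nonneg (toL2 (mulPowCLM 2 φ)), sq_nonneg ‖toL2 (mulPowCLM 1 (derivCLM ℝ ℝ φ))‖]

lemma sq_norm_toL2_mulPowCLM_derivCLM_le (J : ℕ) (φ : 𝓢(ℝ, ℝ)) :
    ‖toL2 (mulPowCLM (J + 1) (derivCLM ℝ ℝ φ))‖ ^ 2
      ≤ ‖toL2 (mulPowCLM (J + 2) (hermiteCLM φ))‖ * ‖toL2 (mulPowCLM J φ)‖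
        + (J + 1) * (2 * J + 1) * ‖toL2 (mulPowCLM J φ)‖ ^ 2 := by
  have henergy := inner_hermiteCLM_mulPowCLM J φ
  have hshift : ⟪toL2 (hermiteCLM φ), toL2 (mulPowCLM (2 * J + 2) φ)⟫
      = ⟪toL2 (mulPowCLM (J + 2) (hermiteCLM φ)), toL2 (mulPowCLM J φ)⟫ :=
    inner_toL2_congr fun x => by simp only [mulPowCLM_apply]; ring
  have hcs :=
    real_inner_le_norm (toL2 (mulPowCLM (J + 2) (hermiteCLM φ))) (toL2 (mulPowCLM J φ))
  nlinarith [sq_nonneg ‖toL2 (mulPowCLM (J + 2) φ)‖]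

lemma hermiteCLM_mulPowCLM_add_two (M : ℕ) (φ : 𝓢(ℝ, ℝ)) :
    hermiteCLM (mulPowCLM (M + 2) φ) = mulPowCLM (M + 2) (hermiteCLM φ)
      - ((M + 2) * (M + 1) : ℝ) • mulPowCLM M φ
      - (2 * (M + 2) : ℝ) • mulPowCLM (M + 1) (derivCLM ℝ ℝ φ) := by
  have hderiv := derivCLM_mulPowCLM_succ (M + 1) φ
  simp only [hermiteCLM, _root_.sub_apply, ContinuousLinearMap.comp_apply, hderiv, map_add,
    map_smul, derivCLM_mulPowCLM_succ, map_sub, mulPowCLM_mulPowCLM]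
  ext x
  simp only [add_apply, sub_apply, smul_apply, smul_eq_mul, mulPowCLM_apply]
  push_cast
  ring

def IsHermiteBounded (k : ℕ) (T : 𝓢(ℝ, ℝ) →L[ℝ] 𝓢(ℝ, ℝ)) : Prop :=
  ∃ C, ∀ φ, ‖toL2 (T φ)‖ ≤ C * ‖toL2 (hermiteCLM^[k] φ)‖

namespace IsHermiteBounded

variable {k : ℕ} {T S : 𝓢(ℝ, ℝ) →L[ℝ] 𝓢(ℝ, ℝ)}

lemma exists_pos (hT : IsHermiteBounded k T) :
    ∃ C > 0, ∀ φ, ‖toL2 (T φ)‖ ≤ C * ‖toL2 (hermiteCLM^[k] φ)‖ := by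
  obtain ⟨C, hC⟩ := hT
  exact ⟨max C 1, by positivity, fun φ =>
    (hC φ).trans (mul_le_mul_of_nonneg_right (le_max_left C 1) (norm_nonneg _))⟩

lemma sub (hT : IsHermiteBounded k T) (hS : IsHermiteBounded k S) :
    IsHermiteBounded k (T - S) := by
  obtain ⟨C, hC⟩ := hT
  obtain ⟨C', hC'⟩ := hS
  refine ⟨C + C', fun φ => ?_⟩
  calc ‖toL2 ((T - S) φ)‖ = ‖toL2 (T φ) - toL2 (S φ)‖ := by rw [_root_.sub_apply, map_sub]
    _ ≤ ‖toL2 (T φ)‖ + ‖toL2 (S φ)‖ := norm_sub_le _ _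
    _ ≤ (C + C') * ‖toL2 (hermiteCLM^[k] φ)‖ := by linarith [hC φ, hC' φ]

lemma smul (hT : IsHermiteBounded k T) (c : ℝ) : IsHermiteBounded k (c • T) := by
  obtain ⟨C, hC⟩ := hT
  refine ⟨|c| * C, fun φ => ?_⟩
  rw [_root_.smul_apply, map_smul, norm_smul, Real.norm_eq_abs, mul_assoc]
  exact mul_le_mul_of_nonneg_left (hC φ) (abs_nonneg c)

lemma mono (hT : IsHermiteBounded k T) {l : ℕ} (hkl : k ≤ l) : IsHermiteBounded l T := by
  obtain ⟨C, hC, hT⟩ := hT.exists_pos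
  exact ⟨C, fun φ => (hT φ).trans
    (mul_le_mul_of_nonneg_left (monotone_norm_toL2_hermiteCLM_iterate φ hkl) hC.le)⟩

lemma comp_hermiteCLM (hT : IsHermiteBounded k T) :
    IsHermiteBounded (k + 1) (T ∘L hermiteCLM) := by
  obtain ⟨C, hC⟩ := hT
  refine ⟨C, fun φ => ?_⟩
  simpa only [Function.iterate_succ_apply, ContinuousLinearMap.comp_apply] using hC (hermiteCLM φ)

lemma of_sq_le {A B : 𝓢(ℝ, ℝ) →L[ℝ] 𝓢(ℝ, ℝ)} (hA : IsHermiteBounded k A)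
    (hB : IsHermiteBounded k B) {e : ℝ} (he : 0 ≤ e)
    (h : ∀ φ, ‖toL2 (T φ)‖ ^ 2 ≤ ‖toL2 (A φ)‖ * ‖toL2 (B φ)‖ + e * ‖toL2 (B φ)‖ ^ 2) :
    IsHermiteBounded k T := by
  obtain ⟨a, ha, hA⟩ := hA.exists_pos
  obtain ⟨b, hb, hB⟩ := hB.exists_pos
  refine ⟨√(a * b + e * b ^ 2), fun φ => ?_⟩
  set N := ‖toL2 (hermiteCLM^[k] φ)‖
  have hN : 0 ≤ N := norm_nonneg _
  have hAφ := hA φ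
  have hBφ := hB φ
  refine le_of_pow_le_pow_left₀ two_ne_zero (by positivity) ?_
  rw [mul_pow, Real.sq_sqrt (by positivity)]
  calc ‖toL2 (T φ)‖ ^ 2 ≤ ‖toL2 (A φ)‖ * ‖toL2 (B φ)‖ + e * ‖toL2 (B φ)‖ ^ 2 := h φ
    _ ≤ (a * N) * (b * N) + e * (b * N) ^ 2 := by gcongr
    _ = (a * b + e * b ^ 2) * N ^ 2 := by ring

end IsHermiteBounded

lemma isHermiteBounded_hermiteCLM_comp_mulPowCLM_of {K : ℕ}
    (h₀ : IsHermiteBounded K (mulPowCLM (2 * K)))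
    (h₁ : IsHermiteBounded (K + 1) (mulPowCLM (2 * K + 2))) :
    IsHermiteBounded (K + 2) (hermiteCLM ∘L mulPowCLM (2 * K + 2)) := by
  have hderiv : IsHermiteBounded (K + 2) (mulPowCLM (2 * K + 1) ∘L derivCLM ℝ ℝ) :=
    h₁.comp_hermiteCLM.of_sq_le (h₀.mono (by omega)) (by positivity)
      fun φ => sq_norm_toL2_mulPowCLM_derivCLM_le (2 * K) φ
  have hsplit : hermiteCLM ∘L mulPowCLM (2 * K + 2) = mulPowCLM (2 * K + 2) ∘L hermiteCLM
      - ((2 * K + 2) * (2 * K + 1) : ℝ) • mulPowCLM (2 * K)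
      - (2 * (2 * K + 2) : ℝ) • (mulPowCLM (2 * K + 1) ∘L derivCLM ℝ ℝ) := by
    ext1 φ
    simpa using hermiteCLM_mulPowCLM_add_two (2 * K) φ
  rw [hsplit]
  exact (h₁.comp_hermiteCLM.sub ((h₀.mono (by omega)).smul _)).sub (hderiv.smul _)

lemma isHermiteBounded_mulPowCLM (k : ℕ) : IsHermiteBounded k (mulPowCLM (2 * k)) := by
  induction k using Nat.twoStepInduction with
  | zero => exact ⟨1, fun φ => by simp [mulPowCLM_zero]⟩
  | one => exact ⟨2, fun φ => norm_toL2_mulPowCLM_two_le φ⟩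
  | more K h₀ h₁ =>
    obtain ⟨C, hC⟩ := isHermiteBounded_hermiteCLM_comp_mulPowCLM_of h₀ h₁
    refine ⟨2 * C, fun φ => ?_⟩
    calc ‖toL2 (mulPowCLM (2 * (K + 2)) φ)‖
        = ‖toL2 (mulPowCLM 2 (mulPowCLM (2 * K + 2) φ))‖ := by
          rw [mulPowCLM_mulPowCLM]; ring_nf
      _ ≤ 2 * ‖toL2 (hermiteCLM (mulPowCLM (2 * K + 2) φ))‖ := norm_toL2_mulPowCLM_two_le _
      _ ≤ 2 * C * ‖toL2 (hermiteCLM^[K + 2] φ)‖ := by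
          rw [mul_assoc]; gcongr; exact hC φ

lemma isHermiteBounded_hermiteCLM_comp_mulPowCLM (k : ℕ) :
    IsHermiteBounded (k + 1) (hermiteCLM ∘L mulPowCLM (2 * k)) := by
  cases k with
  | zero => exact ⟨1, fun φ => by simp [mulPowCLM_zero]⟩
  | succ K =>
    simpa only [mul_add, mul_one] using
      isHermiteBounded_hermiteCLM_comp_mulPowCLM_of (isHermiteBounded_mulPowCLM K)
        (isHermiteBounded_mulPowCLM (K + 1))

lemma lintegral_ofReal_sq_rpow_half (f : 𝓢(ℝ, ℝ)) :
    (∫⁻ x, ENNReal.ofReal (f x ^ 2)) ^ (1 / 2 : ℝ) = ENNReal.ofReal ‖toL2 f‖ := by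
  rw [toLpCLM_apply, norm_toLp, ENNReal.ofReal_toReal (f.eLpNorm_lt_top 2 volume).ne,
    eLpNorm_eq_lintegral_rpow_enorm_toReal two_ne_zero ENNReal.ofNat_ne_top]
  congr 2 with x
  rw [Real.enorm_eq_ofReal_abs, ENNReal.ofReal_rpow_of_nonneg (abs_nonneg _) (by norm_num)]
  simp

lemma IsHermiteBounded.exists_pos_lintegral {k : ℕ} {T : 𝓢(ℝ, ℝ) →L[ℝ] 𝓢(ℝ, ℝ)}
    (hT : IsHermiteBounded k T) :
    ∃ C > 0, ∀ φ : 𝓢(ℝ, ℝ), (∫⁻ x, ENNReal.ofReal (T φ x ^ 2)) ^ (1 / 2 : ℝ)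
      ≤ ENNReal.ofReal C * (∫⁻ x, ENNReal.ofReal ((hermiteOp1^[k] φ x) ^ 2)) ^ (1 / 2 : ℝ) := by
  obtain ⟨C, hC, hT⟩ := hT.exists_pos
  refine ⟨C, hC, fun φ => ?_⟩
  rw [← coe_hermiteCLM_iterate, lintegral_ofReal_sq_rpow_half, lintegral_ofReal_sq_rpow_half,
    ← ENNReal.ofReal_mul hC.le]
  exact ENNReal.ofReal_le_ofReal (hT φ)

end SchwartzMap

/-- `‖x^{2k}φ‖₂ ≤ C_k ‖H^k φ‖₂` and `‖H(x^{2(k-1)}φ)‖₂ ≤ D_k ‖H^k φ‖₂`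
for Schwartz functions `φ` on `ℝ`. -/
theorem weighted_power_le_hermiteOp1_pow (k : ℕ) (hk : 1 ≤ k) :
    ∃ C D : ℝ, 0 < C ∧ 0 < D ∧
      ∀ φ : SchwartzMap ℝ ℝ,
        ((∫⁻ x, ENNReal.ofReal ((x ^ (2 * k) * φ x) ^ 2) ∂volume) ^ (1 / 2 : ℝ)
            ≤ ENNReal.ofReal C *
              (∫⁻ x, ENNReal.ofReal ((hermiteOp1^[k] (⇑φ) x) ^ 2) ∂volume) ^ (1 / 2 : ℝ)) ∧
        ((∫⁻ x, ENNReal.ofReal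
                ((hermiteOp1 (fun y => y ^ (2 * (k - 1)) * φ y) x) ^ 2) ∂volume) ^ (1 / 2 : ℝ)
            ≤ ENNReal.ofReal D *
              (∫⁻ x, ENNReal.ofReal ((hermiteOp1^[k] (⇑φ) x) ^ 2) ∂volume) ^ (1 / 2 : ℝ)) := by
  obtain ⟨K, rfl⟩ : ∃ K, k = K + 1 := ⟨k - 1, by omega⟩
  obtain ⟨C, hC, hweight⟩ := (isHermiteBounded_mulPowCLM (K + 1)).exists_pos_lintegral
  obtain ⟨D, hD, hhermite⟩ :=
    (isHermiteBounded_hermiteCLM_comp_mulPowCLM K).exists_pos_lintegral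
  refine ⟨C, D, hC, hD, fun φ => ⟨by simpa using hweight φ, ?_⟩⟩
  have hcoe : (fun y => y ^ (2 * K) * φ y) = ⇑(mulPowCLM (2 * K) φ) := by
    ext y; simp
  rw [Nat.add_sub_cancel, hcoe, ← coe_hermiteCLM]
  exact hhermite φ
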